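/- If F₁ and F₂ are fragments with F₁ ∩ F₂ ≠ ∅, then either F₁ ∪ F₂ is a fragment, or there exist two disjoint fragments G₁ and G₂ with G₁ ∪ G₂ = F₁ ∪ F₂. -/

import Mathlib

/-- A cell of the square grid. -/
abbrev Cell : Type := ℤ × ℤ

/-- Two cells are adjacent iff they differ by 1 in exactly one coordinate. -/
def Adj (p q : Cell) : Prop := |p.1 - q.1| + |p.2 - q.2| = 1

/-- A board: a finite nonempty set of cells, each adjacent to another cell of the board. -/
def IsBoard (B : Set Cell) : Prop :=
  B.Finite ∧ B.Nonempty ∧ ∀ p ∈ B, ∃ q ∈ B, Adj p q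

/-- A domino of `B`: a two-element subset of `B` whose cells are adjacent. -/
def IsDomino (B : Set Cell) (e : Finset Cell) : Prop :=
  ∃ p q : Cell, p ∈ B ∧ q ∈ B ∧ Adj p q ∧ e = {p, q}

/-- A domino covering of `B`: a finite set of dominoes of `B` whose union is `B`. -/
def IsDominoCovering (B : Set Cell) (D : Finset (Finset Cell)) : Prop :=
  (∀ e ∈ D, IsDomino B e) ∧ (⋃ e ∈ D, (↑e : Set Cell)) = B

/-- A saturated domino covering: removing any domino leaves some cell uncovered. -/
def IsSaturatedCovering (B : Set Cell) (D : Finset (Finset Cell)) : Prop :=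
  IsDominoCovering B D ∧ ∀ e ∈ D, (⋃ e' ∈ D.erase e, (↑e' : Set Cell)) ⊂ B

/-- `dNum B` is the maximum number of dominoes in a saturated domino covering of `B`. -/
noncomputable def dNum (B : Set Cell) : ℕ :=
  sSup {k : ℕ | ∃ D : Finset (Finset Cell), IsSaturatedCovering B D ∧ D.card = k}

/-- The X-pentomino centered at `c`: the cell `c` together with its four adjacent cells. -/
def Xpent (c : Cell) : Set Cell :=
  {c, (c.1 + 1, c.2), (c.1 - 1, c.2), (c.1, c.2 + 1), (c.1, c.2 - 1)}

/-- A set of cells is connected under adjacency. -/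
def ConnectedUnderAdj (F : Set Cell) : Prop :=
  ∀ p ∈ F, ∀ q ∈ F, Relation.ReflTransGen (fun a b => a ∈ F ∧ b ∈ F ∧ Adj a b) p q

/-- A fragment: a connected subset of some X-pentomino with at least two cells. -/
def IsFragment (F : Set Cell) : Prop :=
  (∃ c : Cell, F ⊆ Xpent c) ∧ 2 ≤ F.ncard ∧ ConnectedUnderAdj F

/-- A fragment tiling of `B`: a partition of `B` into pairwise disjoint fragments. -/
def IsFragmentTiling (B : Set Cell) (T : Finset (Set Cell)) : Prop :=
  (∀ F ∈ T, IsFragment F) ∧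
  (∀ F ∈ T, ∀ G ∈ T, F ≠ G → Disjoint F G) ∧
  (⋃ F ∈ T, F) = B

/-- `fNum B` is the minimum number of fragments in a fragment tiling of `B`. -/
noncomputable def fNum (B : Set Cell) : ℕ :=
  sInf {k : ℕ | ∃ T : Finset (Set Cell), IsFragmentTiling B T ∧ T.card = k}

/-- `xNum B` is the minimum number of X-pentominoes (centered anywhere, allowed to
overlap and to extend outside `B`) whose union covers `B`. -/
noncomputable def xNum (B : Set Cell) : ℕ :=
  sInf {k : ℕ | ∃ C : Finset Cell, B ⊆ (⋃ c ∈ C, Xpent c) ∧ C.card = k}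

/-!
A fragment inside `Xpent c` contains `c`, because any two adjacent cells of an X-pentomino include
its centre; so a fragment is just a subset of `Xpent c` containing `c` and some other cell. Let
`F₁ ⊆ Xpent c₁` and `F₂ ⊆ Xpent c₂` be overlapping fragments.

If one centre lies in the other fragment, the centres coincide (and the union is a fragment) or are
adjacent. Two X-pentominoes with adjacent centres meet only in the two centres, so either one
fragment is contained in `{c₁, c₂}` and the union is a fragment around the other centre, or
`F₁ \ {c₂}` and `F₂ \ (F₁ \ {c₂})` are the two disjoint fragments.

Otherwise `c₁ ∉ F₂` and `c₂ ∉ F₁`. If `F₂` has a non-central cell outside `F₁`, then `F₁` and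
`F₂ \ F₁` work, and symmetrically. If not, `F₁ ∪ F₂` consists of `c₁`, `c₂` and the common cells;
two common cells `x₀ ≠ y₀` give `F₁ \ {y₀}` and `F₂ \ (F₁ \ {y₀})`, and a single common cell `x₀`,
adjacent to both centres, makes the union a fragment around `x₀`.
-/

def SplitsIntoTwoFragments (S : Set Cell) : Prop :=
  ∃ G₁ G₂ : Set Cell, IsFragment G₁ ∧ IsFragment G₂ ∧ Disjoint G₁ G₂ ∧ G₁ ∪ G₂ = S

lemma Adj.symm {p q : Cell} (h : Adj p q) : Adj q p := by
  unfold Adj at *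
  rwa [abs_sub_comm q.1, abs_sub_comm q.2]

lemma Adj.ne {p q : Cell} (h : Adj p q) : p ≠ q := by
  rintro rfl
  simp [Adj] at h

lemma mem_Xpent_iff {x c : Cell} : x ∈ Xpent c ↔ |x.1 - c.1| + |x.2 - c.2| ≤ 1 := by
  obtain ⟨a, b⟩ := x
  obtain ⟨u, v⟩ := c
  simp only [Xpent, Set.mem_insert_iff, Set.mem_singleton_iff, Prod.mk.injEq, Int.abs_eq_natAbs]
  omega

lemma mem_Xpent_iff_eq_or_adj {x c : Cell} : x ∈ Xpent c ↔ x = c ∨ Adj x c := by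
  rw [mem_Xpent_iff, Adj, Prod.ext_iff]
  simp only [Int.abs_eq_natAbs]
  omega

lemma self_mem_Xpent (c : Cell) : c ∈ Xpent c :=
  mem_Xpent_iff_eq_or_adj.2 (Or.inl rfl)

lemma mem_Xpent_comm {x c : Cell} : x ∈ Xpent c ↔ c ∈ Xpent x := by
  simp only [mem_Xpent_iff_eq_or_adj, eq_comm (a := x)]
  exact or_congr_right ⟨Adj.symm, Adj.symm⟩

lemma eq_or_eq_of_adj_of_mem_Xpent {a b c : Cell} (ha : a ∈ Xpent c) (hb : b ∈ Xpent c)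
    (hab : Adj a b) : a = c ∨ b = c := by
  rw [mem_Xpent_iff] at ha hb
  unfold Adj at hab
  simp only [Prod.ext_iff, Int.abs_eq_natAbs] at *
  omega

lemma eq_or_eq_of_mem_Xpent_of_adj {x c₁ c₂ : Cell} (hc : Adj c₁ c₂) (h₁ : x ∈ Xpent c₁)
    (h₂ : x ∈ Xpent c₂) : x = c₁ ∨ x = c₂ := by
  rw [mem_Xpent_iff] at h₁ h₂
  unfold Adj at hc
  simp only [Prod.ext_iff, Int.abs_eq_natAbs] at *
  omega

lemma finite_Xpent (c : Cell) : (Xpent c).Finite := by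
  unfold Xpent
  exact Set.toFinite _

lemma isFragment_iff {F : Set Cell} :
    IsFragment F ↔ ∃ c ∈ F, F ⊆ Xpent c ∧ ∃ x ∈ F, x ≠ c := by
  constructor
  · rintro ⟨⟨c, hs⟩, hcard, hconn⟩
    obtain ⟨p, hp, q, hq, hpq⟩ :=
      (Set.one_lt_ncard ((finite_Xpent c).subset hs)).1 hcard
    have hc : c ∈ F := by
      rcases (hconn p hp q hq).cases_head with rfl | ⟨b, ⟨-, hb, hpb⟩, -⟩
      · exact absurd rfl hpq
      · rcases eq_or_eq_of_adj_of_mem_Xpent (hs hp) (hs hb) hpb with rfl | rfl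
        exacts [hp, hb]
    by_cases hpc : p = c
    · exact ⟨c, hc, hs, q, hq, hpc ▸ hpq.symm⟩
    · exact ⟨c, hc, hs, p, hp, hpc⟩
  · rintro ⟨c, hc, hs, x, hx, hxc⟩
    refine ⟨⟨c, hs⟩, ?_, fun p hp q hq => ?_⟩
    · exact (Set.one_lt_ncard ((finite_Xpent c).subset hs)).2 ⟨c, hc, x, hx, hxc.symm⟩
    · have to_center : ∀ z ∈ F,
          Relation.ReflTransGen (fun a b => a ∈ F ∧ b ∈ F ∧ Adj a b) z c := fun z hz => by
        rcases mem_Xpent_iff_eq_or_adj.1 (hs hz) with rfl | hzc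
        exacts [.refl, .single ⟨hz, hc, hzc⟩]
      have from_center : Relation.ReflTransGen (fun a b => a ∈ F ∧ b ∈ F ∧ Adj a b) c q := by
        rcases mem_Xpent_iff_eq_or_adj.1 (hs hq) with rfl | hqc
        exacts [.refl, .single ⟨hc, hq, hqc.symm⟩]
      exact (to_center p hp).trans from_center

lemma splitsIntoTwoFragments_union {F₁ F₂ G : Set Cell} {c₂ y : Cell} (hG : IsFragment G)
    (hGF₁ : G ⊆ F₁) (hF₁ : F₁ ⊆ G ∪ F₂) (hc₂ : c₂ ∈ F₂ \ G) (hs₂ : F₂ ⊆ Xpent c₂)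
    (hy : y ∈ F₂ \ G) (hyc : y ≠ c₂) : SplitsIntoTwoFragments (F₁ ∪ F₂) := by
  refine ⟨G, F₂ \ G, hG, ?_, Set.disjoint_sdiff_right, ?_⟩
  · exact isFragment_iff.2 ⟨c₂, hc₂, Set.sdiff_subset.trans hs₂, y, hy, hyc⟩
  · rw [Set.union_sdiff_self]
    exact (Set.union_subset_union_left _ hGF₁).antisymm
      (Set.union_subset hF₁ Set.subset_union_right)

lemma isFragment_union_of_subset_pair {F₁ F₂ : Set Cell} {c₁ c₂ : Cell} (hc : Adj c₁ c₂)
    (hc₁ : c₁ ∈ F₁) (h₁ : F₁ ⊆ {c₁, c₂}) (hc₂ : c₂ ∈ F₂) (hs₂ : F₂ ⊆ Xpent c₂) :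
    IsFragment (F₁ ∪ F₂) := by
  have hpair : {c₁, c₂} ⊆ Xpent c₂ := Set.insert_subset_iff.2
    ⟨mem_Xpent_iff_eq_or_adj.2 (.inr hc), Set.singleton_subset_iff.2 (self_mem_Xpent c₂)⟩
  exact isFragment_iff.2
    ⟨c₂, .inr hc₂, Set.union_subset (h₁.trans hpair) hs₂, c₁, .inl hc₁, hc.ne⟩

lemma isFragment_or_splits_of_adj {F₁ F₂ : Set Cell} {c₁ c₂ : Cell} (hc : Adj c₁ c₂)
    (hc₁ : c₁ ∈ F₁) (hs₁ : F₁ ⊆ Xpent c₁) (hc₂ : c₂ ∈ F₂) (hs₂ : F₂ ⊆ Xpent c₂) :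
    IsFragment (F₁ ∪ F₂) ∨ SplitsIntoTwoFragments (F₁ ∪ F₂) := by
  by_cases h₁ : F₁ ⊆ {c₁, c₂}
  · exact .inl (isFragment_union_of_subset_pair hc hc₁ h₁ hc₂ hs₂)
  by_cases h₂ : F₂ ⊆ {c₁, c₂}
  · rw [Set.union_comm]
    exact .inl (isFragment_union_of_subset_pair hc.symm hc₂
      (h₂.trans (Set.pair_comm c₁ c₂).subset) hc₁ hs₁)
  obtain ⟨x₁, hx₁, hx₁c⟩ := Set.not_subset.1 h₁
  obtain ⟨x₂, hx₂, hx₂c⟩ := Set.not_subset.1 h₂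
  simp only [Set.mem_insert_iff, Set.mem_singleton_iff, not_or] at hx₁c hx₂c
  have hG : IsFragment (F₁ \ {c₂}) := isFragment_iff.2
    ⟨c₁, ⟨hc₁, hc.ne⟩, Set.sdiff_subset.trans hs₁, x₁, ⟨hx₁, hx₁c.2⟩, hx₁c.1⟩
  have hx₂F₁ : x₂ ∉ F₁ := fun h => by
    rcases eq_or_eq_of_mem_Xpent_of_adj hc (hs₁ h) (hs₂ hx₂) with h | h
    exacts [hx₂c.1 h, hx₂c.2 h]
  refine .inr (splitsIntoTwoFragments_union hG Set.sdiff_subset ?_ ⟨hc₂, fun h => h.2 rfl⟩ hs₂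
    ⟨hx₂, fun h => hx₂F₁ h.1⟩ hx₂c.2)
  exact (Set.subset_sdiff_union _ _).trans
    (Set.union_subset_union_right _ (Set.singleton_subset_iff.2 hc₂))

lemma isFragment_or_splits_of_centers_not_mem {F₁ F₂ : Set Cell} {c₁ c₂ x₀ : Cell}
    (hc₁ : c₁ ∈ F₁) (hs₁ : F₁ ⊆ Xpent c₁) (hc₂ : c₂ ∈ F₂) (hs₂ : F₂ ⊆ Xpent c₂)
    (hc₁F₂ : c₁ ∉ F₂) (hc₂F₁ : c₂ ∉ F₁) (hx₀ : x₀ ∈ F₁ ∩ F₂) :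
    IsFragment (F₁ ∪ F₂) ∨ SplitsIntoTwoFragments (F₁ ∪ F₂) := by
  have hx₀c₁ : x₀ ≠ c₁ := fun h => hc₁F₂ (h ▸ hx₀.2)
  have hF₁ : IsFragment F₁ := isFragment_iff.2 ⟨c₁, hc₁, hs₁, x₀, hx₀.1, hx₀c₁⟩
  have hF₂ : IsFragment F₂ :=
    isFragment_iff.2 ⟨c₂, hc₂, hs₂, x₀, hx₀.2, fun h => hc₂F₁ (h ▸ hx₀.1)⟩
  by_cases hy : ∃ y ∈ F₂ \ F₁, y ≠ c₂
  · obtain ⟨y, hy, hyc⟩ := hy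
    exact .inr (splitsIntoTwoFragments_union hF₁ subset_rfl Set.subset_union_left
      ⟨hc₂, hc₂F₁⟩ hs₂ hy hyc)
  by_cases hx : ∃ x ∈ F₁ \ F₂, x ≠ c₁
  · obtain ⟨x, hx, hxc⟩ := hx
    rw [Set.union_comm]
    exact .inr (splitsIntoTwoFragments_union hF₂ subset_rfl Set.subset_union_left
      ⟨hc₁, hc₁F₂⟩ hs₁ hx hxc)
  push Not at hx hy
  by_cases hy₀ : ∃ y₀ ∈ F₁ ∩ F₂, y₀ ≠ x₀
  · obtain ⟨y₀, hy₀, hy₀x₀⟩ := hy₀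
    have hG : IsFragment (F₁ \ {y₀}) := isFragment_iff.2 ⟨c₁, ⟨hc₁, fun h => hc₁F₂ (h ▸ hy₀.2)⟩,
      Set.sdiff_subset.trans hs₁, x₀, ⟨hx₀.1, hy₀x₀.symm⟩, hx₀c₁⟩
    refine .inr (splitsIntoTwoFragments_union hG Set.sdiff_subset ?_ ⟨hc₂, fun h => hc₂F₁ h.1⟩
      hs₂ ⟨hy₀.2, fun h => h.2 rfl⟩ fun h => hc₂F₁ (h ▸ hy₀.1))
    exact (Set.subset_sdiff_union _ _).trans
      (Set.union_subset_union_right _ (Set.singleton_subset_iff.2 hy₀.2))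
  push Not at hy₀
  have hsub : F₁ ∪ F₂ ⊆ Xpent x₀ := by
    rintro z (hz | hz)
    · by_cases hz₂ : z ∈ F₂
      · exact hy₀ z ⟨hz, hz₂⟩ ▸ self_mem_Xpent x₀
      · exact hx z ⟨hz, hz₂⟩ ▸ mem_Xpent_comm.1 (hs₁ hx₀.1)
    · by_cases hz₁ : z ∈ F₁
      · exact hy₀ z ⟨hz₁, hz⟩ ▸ self_mem_Xpent x₀
      · exact hy z ⟨hz, hz₁⟩ ▸ mem_Xpent_comm.1 (hs₂ hx₀.2)
  exact .inl (isFragment_iff.2 ⟨x₀, .inl hx₀.1, hsub, c₁, .inl hc₁, hx₀c₁.symm⟩)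

/-- Two overlapping fragments can be replaced by a single fragment or by
two disjoint fragments covering the same set of cells. -/
theorem overlapping_fragments (F₁ F₂ : Set Cell)
    (h₁ : IsFragment F₁) (h₂ : IsFragment F₂) (h : (F₁ ∩ F₂).Nonempty) :
    IsFragment (F₁ ∪ F₂) ∨
      ∃ G₁ G₂ : Set Cell, IsFragment G₁ ∧ IsFragment G₂ ∧ Disjoint G₁ G₂ ∧
        G₁ ∪ G₂ = F₁ ∪ F₂ := by
  obtain ⟨c₁, hc₁, hs₁, x₁, hx₁, hx₁c⟩ := isFragment_iff.1 h₁
  obtain ⟨c₂, hc₂, hs₂, -⟩ := isFragment_iff.1 h₂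
  obtain ⟨x₀, hx₀⟩ := h
  by_cases hfar : c₁ ∉ F₂ ∧ c₂ ∉ F₁
  · exact isFragment_or_splits_of_centers_not_mem hc₁ hs₁ hc₂ hs₂ hfar.1 hfar.2 hx₀
  have hnear : c₁ = c₂ ∨ Adj c₁ c₂ := by
    rcases not_and_or.1 hfar with h | h
    · exact mem_Xpent_iff_eq_or_adj.1 (hs₂ (not_not.1 h))
    · rcases mem_Xpent_iff_eq_or_adj.1 (hs₁ (not_not.1 h)) with h | h
      exacts [.inl h.symm, .inr h.symm]
  rcases hnear with rfl | hc
  · exact .inl (isFragment_iff.2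
      ⟨c₁, .inl hc₁, Set.union_subset hs₁ hs₂, x₁, .inl hx₁, hx₁c⟩)
  · exact isFragment_or_splits_of_adj hc hc₁ hs₁ hc₂ hs₂
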